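/- Let σ be the substitution B ↦ BW, W ↦ BWW on the alphabet {B, W}. For every k, the number of occurrences of the letter W in σ^k(W) is f (2k) and the number of occurrences of the letter B in σ^k(W) is f (2k−1) when k ≥ 1 (and is 0 when k = 0), where f is the Fibonacci sequence with f 0 = f 1 = 1. -/

import Mathlib

inductive Letter : Type
  | B : Letter
  | W : Letter
deriving DecidableEq, Repr

def fib1 : ℕ → ℕ
  | 0 => 1
  | 1 => 1
  | n + 2 => fib1 (n + 1) + fib1 n

def sub1 : Letter → List Letter
  | Letter.B => [Letter.B, Letter.W]
  | Letter.W => [Letter.B, Letter.W, Letter.W]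

def subw (w : List Letter) : List Letter := w.flatMap sub1

/-! The substitution acts on the letter counts `(#B, #W)` by the matrix `[[1, 1], [1, 2]]`, the
square of the Fibonacci matrix, so one application advances both counts by two Fibonacci steps:
`(#B, #W)` of `σ^k(W)` is `(F(2k), F(2k+1))` with `F = Nat.fib`. -/

theorem fib1_eq_fib (n : ℕ) : fib1 n = Nat.fib (n + 1) := by
  induction n using fib1.induct with
  | case1 | case2 => rfl
  | case3 n ih₁ ih₀ => rw [fib1, ih₁, ih₀, Nat.fib_add_two (n := n + 1), add_comm]

theorem subw_cons (a : Letter) (w : List Letter) : subw (a :: w) = sub1 a ++ subw w := rfl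

theorem count_B_subw (w : List Letter) :
    (subw w).count Letter.B = w.count Letter.B + w.count Letter.W := by
  induction w with
  | nil => rfl
  | cons a w ih =>
    cases a <;> simp [subw_cons, sub1, ih] <;> omega

theorem count_W_subw (w : List Letter) :
    (subw w).count Letter.W = w.count Letter.B + 2 * w.count Letter.W := by
  induction w with
  | nil => rfl
  | cons a w ih =>
    cases a <;> simp [subw_cons, sub1, ih] <;> omega

theorem count_iterate_subw (k : ℕ) :
    (subw^[k] [Letter.W]).count Letter.B = Nat.fib (2 * k) ∧
    (subw^[k] [Letter.W]).count Letter.W = Nat.fib (2 * k + 1) := by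
  induction k with
  | zero => exact ⟨rfl, rfl⟩
  | succ k ih =>
    obtain ⟨hB, hW⟩ := ih
    have h₂ : Nat.fib (2 * k + 2) = Nat.fib (2 * k) + Nat.fib (2 * k + 1) := Nat.fib_add_two
    have h₃ : Nat.fib (2 * k + 2 + 1) = Nat.fib (2 * k + 1) + Nat.fib (2 * k + 2) := Nat.fib_add_two
    rw [Function.iterate_succ_apply', count_B_subw, count_W_subw, hB, hW,
      show 2 * (k + 1) = 2 * k + 2 by ring]
    omega

theorem count_iterate_sub :
    (∀ k : ℕ, (subw^[k] [Letter.W]).count Letter.W = fib1 (2 * k)) ∧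
    (subw^[0] [Letter.W]).count Letter.B = 0 ∧
    (∀ k : ℕ, 1 ≤ k → (subw^[k] [Letter.W]).count Letter.B = fib1 (2 * k - 1)) := by
  refine ⟨fun k => ?_, rfl, fun k hk => ?_⟩
  · rw [(count_iterate_subw k).2, fib1_eq_fib]
  · rw [(count_iterate_subw k).1, fib1_eq_fib, Nat.sub_add_cancel (by omega)]
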